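/- arXiv:2307.15764 — 4 statements merged into one kernel-verified Lean document; each statement's English description precedes it below -/
import Mathlib

section
/- Let Q be a Markov kernel from X to Y with Dobrushin coefficient δ(Q), and let μ, ν be probability measures on X. Define P_μ(A) = ∫ Q(A|x) μ(dx). Then ‖P_μ − P_ν‖_TV ≤ (1 − δ(Q))·‖μ − ν‖_TV. -/
open MeasureTheory ProbabilityTheory

/-- Total variation distance: sup over measurable functions bounded by 1. -/
noncomputable def TV {X : Type*} [MeasurableSpace X] (μ ν : Measure X) : ℝ :=
  sSup {r : ℝ | ∃ g : X → ℝ, Measurable g ∧ (∀ x, |g x| ≤ 1) ∧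
    r = |∫ x, g x ∂μ - ∫ x, g x ∂ν|}

/-- Dobrushin coefficient of a kernel: infimum over pairs of points and finite
measurable partitions of the sum of minima. -/
noncomputable def dobrushin {X Y : Type*} [MeasurableSpace X] [MeasurableSpace Y]
    (Q : Kernel X Y) : ℝ :=
  sInf {r : ℝ | ∃ (x x' : X) (n : ℕ) (A : Fin n → Set Y),
    (∀ i, MeasurableSet (A i)) ∧ Pairwise (Function.onFun Disjoint A) ∧
    (⋃ i, A i) = Set.univ ∧
    r = ∑ i, min ((Q x (A i)).toReal) ((Q x' (A i)).toReal)}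

/-!
For `|g| ≤ 1` put `f x = ∫ g dQ(x)`. Given two points `x, x'`, a Hahn set `s` for `Q x` against
`Q x'` splits the difference `∫ g dQ(x) - ∫ g dQ(x')` into the parts on `s` and on `sᶜ`; on each
part one measure dominates the other, so the part is bounded by the excess mass. The total excess
is `2 - 2 (min + min)` over the partition `{s, sᶜ}`, hence at most `2 (1 - δ(Q))`. So `f` has
oscillation at most `2 (1 - δ(Q))`, and after subtracting its midrange, `f / (1 - δ(Q))` is a test
function for `‖μ - ν‖_TV`, while `∫ f dμ = ∫ g dP_μ`.
-/

lemma exists_abs_sub_le_of_forall_sub_le {α : Type*} {f : α → ℝ} {M : ℝ}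
    (h : ∀ x x', f x - f x' ≤ 2 * M) : ∃ c, ∀ x, |f x - c| ≤ M := by
  rcases isEmpty_or_nonempty α with _ | ⟨⟨x₀⟩⟩
  · exact ⟨0, isEmptyElim⟩
  have hbdd : BddAbove (Set.range f) :=
    ⟨f x₀ + 2 * M, by rintro _ ⟨x, rfl⟩; linarith [h x x₀]⟩
  refine ⟨sSup (Set.range f) - M, fun x => abs_le.2 ⟨?_, ?_⟩⟩
  · have : sSup (Set.range f) ≤ f x + 2 * M :=
      csSup_le ⟨_, x, rfl⟩ (by rintro _ ⟨x', rfl⟩; linarith [h x' x])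
    linarith
  · linarith [le_csSup hbdd ⟨x, rfl⟩]

section TotalVariation

variable {X : Type*} [MeasurableSpace X]

lemma Measurable.integrable_of_abs_le {μ : Measure X} [IsFiniteMeasure μ] {g : X → ℝ}
    (hg : Measurable g) {C : ℝ} (hb : ∀ x, |g x| ≤ C) : Integrable g μ :=
  .of_bound hg.aestronglyMeasurable C (ae_of_all _ hb)

lemma abs_integral_sub_le_TV {μ ν : Measure X} [IsProbabilityMeasure μ] [IsProbabilityMeasure ν]
    {g : X → ℝ} (hg : Measurable g) (hb : ∀ x, |g x| ≤ 1) :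
    |∫ x, g x ∂μ - ∫ x, g x ∂ν| ≤ TV μ ν := by
  refine le_csSup ⟨2, ?_⟩ ⟨g, hg, hb, rfl⟩
  rintro _ ⟨f, -, hf, rfl⟩
  have h (m : Measure X) [IsProbabilityMeasure m] : |∫ x, f x ∂m| ≤ 1 := by
    simpa using norm_integral_le_of_norm_le_const (μ := m) (f := f) (ae_of_all _ hf)
  linarith [abs_sub (∫ x, f x ∂μ) (∫ x, f x ∂ν), h μ, h ν]

lemma TV_le_of_forall {μ ν : Measure X} {C : ℝ}
    (h : ∀ g : X → ℝ, Measurable g → (∀ x, |g x| ≤ 1) → |∫ x, g x ∂μ - ∫ x, g x ∂ν| ≤ C) :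
    TV μ ν ≤ C := by
  refine csSup_le ⟨0, 0, measurable_const, by simp, by simp⟩ ?_
  rintro _ ⟨g, hg, hb, rfl⟩
  exact h g hg hb

lemma abs_integral_sub_le_mul_TV {μ ν : Measure X} [IsProbabilityMeasure μ]
    [IsProbabilityMeasure ν] {h : X → ℝ} (hh : Measurable h) {M : ℝ} (hM : ∀ x, |h x| ≤ M) :
    |∫ x, h x ∂μ - ∫ x, h x ∂ν| ≤ M * TV μ ν := by
  have hM₀ : 0 ≤ M := (abs_nonneg _).trans (hM (nonempty_of_isProbabilityMeasure μ).some)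
  rcases hM₀.eq_or_lt with rfl | hMpos
  · simp [funext fun x => abs_nonpos_iff.1 (hM x)]
  have hb x : |M⁻¹ * h x| ≤ 1 := by
    rw [abs_mul, abs_inv, abs_of_pos hMpos, inv_mul_le_one₀ hMpos]
    exact hM x
  calc |∫ x, h x ∂μ - ∫ x, h x ∂ν| = M * |∫ x, M⁻¹ * h x ∂μ - ∫ x, M⁻¹ * h x ∂ν| := by
        rw [integral_const_mul, integral_const_mul, ← mul_sub, abs_mul, abs_inv,
          abs_of_pos hMpos, mul_inv_cancel_left₀ hMpos.ne']
    _ ≤ M * TV μ ν := by gcongr; exact abs_integral_sub_le_TV (hh.const_mul _) hb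

lemma abs_integral_sub_le_mul_TV_of_forall_sub_le {μ ν : Measure X} [IsProbabilityMeasure μ]
    [IsProbabilityMeasure ν] {f : X → ℝ} (hf : Measurable f) {M : ℝ}
    (hosc : ∀ x x', f x - f x' ≤ 2 * M) :
    |∫ x, f x ∂μ - ∫ x, f x ∂ν| ≤ M * TV μ ν := by
  obtain ⟨c, hc⟩ := exists_abs_sub_le_of_forall_sub_le hosc
  have hbound x : |f x| ≤ M + |c| := by
    have := abs_add_le (f x - c) c
    rw [sub_add_cancel] at this
    linarith [hc x]
  have hshift (m : Measure X) [IsProbabilityMeasure m] :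
      ∫ x, f x - c ∂m = ∫ x, f x ∂m - c := by
    simp [integral_sub (hf.integrable_of_abs_le hbound) (integrable_const c)]
  calc |∫ x, f x ∂μ - ∫ x, f x ∂ν| = |∫ x, f x - c ∂μ - ∫ x, f x - c ∂ν| := by
        rw [hshift μ, hshift ν, sub_sub_sub_cancel_right]
    _ ≤ M * TV μ ν := abs_integral_sub_le_mul_TV (hf.sub_const c) hc

end TotalVariation

section Kernel

variable {X Y : Type*} [MeasurableSpace X] [MeasurableSpace Y]

lemma abs_integral_sub_le_of_le {m m' : Measure Y} [IsFiniteMeasure m] [IsFiniteMeasure m']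
    (hle : m ≤ m') {g : Y → ℝ} (hg : Measurable g) (hb : ∀ y, |g y| ≤ 1) :
    |∫ y, g y ∂m' - ∫ y, g y ∂m| ≤ m'.real Set.univ - m.real Set.univ := by
  rw [← Measure.sub_add_cancel_of_le hle, integral_add_measure (hg.integrable_of_abs_le hb)
    (hg.integrable_of_abs_le hb), measureReal_add_apply, add_sub_cancel_right,
    add_sub_cancel_right]
  simpa using norm_integral_le_of_norm_le_const (μ := m' - m) (f := g) (ae_of_all _ hb)

lemma MeasureTheory.IsHahnDecomposition.abs_integral_sub_le {p q : Measure Y}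
    [IsProbabilityMeasure p] [IsProbabilityMeasure q] {s : Set Y} (hs : IsHahnDecomposition p q s)
    {g : Y → ℝ} (hg : Measurable g) (hb : ∀ y, |g y| ≤ 1) :
    |∫ y, g y ∂q - ∫ y, g y ∂p| ≤
      2 - 2 * (min (p.real s) (q.real s) + min (p.real sᶜ) (q.real sᶜ)) := by
  have hon := abs_integral_sub_le_of_le hs.le_on hg hb
  have hoff := abs_integral_sub_le_of_le hs.ge_on_compl hg hb
  simp only [measureReal_restrict_apply_univ] at hon hoff
  have hs_le : p.real s ≤ q.real s := by
    linarith [abs_nonneg (∫ y in s, g y ∂q - ∫ y in s, g y ∂p)]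
  have hsc_le : q.real sᶜ ≤ p.real sᶜ := by
    linarith [abs_nonneg (∫ y in sᶜ, g y ∂p - ∫ y in sᶜ, g y ∂q)]
  have hsplit (m : Measure Y) [IsProbabilityMeasure m] :
      ∫ y, g y ∂m = ∫ y in s, g y ∂m + ∫ y in sᶜ, g y ∂m :=
    (integral_add_compl hs.measurableSet (hg.integrable_of_abs_le hb)).symm
  calc |∫ y, g y ∂q - ∫ y, g y ∂p|
      = |(∫ y in s, g y ∂q - ∫ y in s, g y ∂p) + (∫ y in sᶜ, g y ∂q - ∫ y in sᶜ, g y ∂p)| := by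
        rw [hsplit p, hsplit q, add_sub_add_comm]
    _ ≤ |∫ y in s, g y ∂q - ∫ y in s, g y ∂p| + |∫ y in sᶜ, g y ∂p - ∫ y in sᶜ, g y ∂q| := by
        rw [abs_sub_comm (∫ y in sᶜ, g y ∂p)]
        exact abs_add_le _ _
    _ ≤ (q.real s - p.real s) + (p.real sᶜ - q.real sᶜ) := add_le_add hon hoff
    _ = 2 - 2 * (min (p.real s) (q.real s) + min (p.real sᶜ) (q.real sᶜ)) := by
        rw [min_eq_left hs_le, min_eq_right hsc_le]
        linarith [probReal_add_probReal_compl (μ := p) hs.measurableSet,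
          probReal_add_probReal_compl (μ := q) hs.measurableSet]

lemma integral_comp_eq_integral_integral {μ : Measure X} [SFinite μ] {κ : Kernel X Y}
    [IsSFiniteKernel κ] {E : Type*} [NormedAddCommGroup E] [NormedSpace ℝ E] {g : Y → E}
    (hg : Integrable g (κ ∘ₘ μ)) : ∫ y, g y ∂(κ ∘ₘ μ) = ∫ x, ∫ y, g y ∂κ x ∂μ := by
  have hg' := (Measure.integrable_compProd_snd_iff hg.aestronglyMeasurable).2 hg
  rw [← Measure.integral_compProd hg', ← Measure.snd_compProd, Measure.snd,
    integral_map measurable_snd.aemeasurable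
      (by rw [← Measure.snd, Measure.snd_compProd]; exact hg.1)]

lemma dobrushin_le_min_add_min (Q : Kernel X Y) (x x' : X) {s : Set Y} (hs : MeasurableSet s) :
    dobrushin Q ≤ min ((Q x).real s) ((Q x').real s) + min ((Q x).real sᶜ) ((Q x').real sᶜ) := by
  refine csInf_le ⟨0, ?_⟩ ⟨x, x', 2, ![s, sᶜ], ?_, ?_, ?_, ?_⟩
  · rintro _ ⟨-, -, -, -, -, -, -, rfl⟩
    exact Finset.sum_nonneg fun i _ => le_min ENNReal.toReal_nonneg ENNReal.toReal_nonneg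
  · simp [Fin.forall_fin_two, hs]
  · simp [Pairwise, Fin.forall_fin_two, Function.onFun, disjoint_compl_left, disjoint_compl_right]
  · ext y
    simp [Fin.exists_fin_two, em]
  · simp [Fin.sum_univ_two, Measure.real]

lemma integral_sub_integral_le_two_mul_one_sub_dobrushin (Q : Kernel X Y) [IsMarkovKernel Q]
    {g : Y → ℝ} (hg : Measurable g) (hb : ∀ y, |g y| ≤ 1) (x x' : X) :
    ∫ y, g y ∂Q x - ∫ y, g y ∂Q x' ≤ 2 * (1 - dobrushin Q) := by
  obtain ⟨s, hs⟩ := exists_isHahnDecomposition (Q x') (Q x)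
  have h := (abs_le.1 (hs.abs_integral_sub_le hg hb)).2
  have := dobrushin_le_min_add_min Q x' x hs.measurableSet
  linarith

end Kernel

theorem stmt6 {X Y : Type*} [MeasurableSpace X] [MeasurableSpace Y]
    (Q : Kernel X Y) [IsMarkovKernel Q]
    (μ ν : Measure X) [IsProbabilityMeasure μ] [IsProbabilityMeasure ν] :
    TV (μ.bind (fun x => Q x)) (ν.bind (fun x => Q x)) ≤ (1 - dobrushin Q) * TV μ ν := by
  refine TV_le_of_forall fun g hg hb => ?_
  have hbind (m : Measure X) [IsProbabilityMeasure m] :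
      ∫ y, g y ∂(m.bind fun x => Q x) = ∫ x, ∫ y, g y ∂Q x ∂m :=
    integral_comp_eq_integral_integral (hg.integrable_of_abs_le hb)
  rw [hbind μ, hbind ν]
  exact abs_integral_sub_le_mul_TV_of_forall_sub_le
    (hg.stronglyMeasurable.integral_kernel (κ := Q)).measurable
    (integral_sub_integral_le_two_mul_one_sub_dobrushin Q hg hb)
end

section
/- Let T be a Markov kernel on a compact metric space X of diameter D satisfying ‖T(·|x) − T(·|x')‖_TV ≤ α·d(x,x'), and let ω : X → ℝ be measurable with ‖ω‖_∞ ≤ D/2. Then for any probability measures z, z' on X, |∫∫ ω(x₁) T(dx₁|x₀) z'(dx₀) − ∫∫ ω(x₁) T(dx₁|x₀) z(dx₀)| ≤ (αD/2)·W₁(z,z'). -/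
open MeasureTheory ProbabilityTheory

/-- 1-Wasserstein distance via Kantorovich–Rubinstein duality. -/
noncomputable def W1 {X : Type*} [MeasurableSpace X] [MetricSpace X]
    (μ ν : Measure X) : ℝ :=
  sSup {r : ℝ | ∃ f : X → ℝ, LipschitzWith 1 f ∧ r = ∫ x, f x ∂μ - ∫ x, f x ∂ν}

lemma my_integrable_of_bdd {X : Type*} [MeasurableSpace X] (μ : Measure X) [IsFiniteMeasure μ]
    {f : X → ℝ} (hf : Measurable f) (C : ℝ) (hC : ∀ x, |f x| ≤ C) :
    Integrable f μ :=
  (integrable_const C).mono' hf.aestronglyMeasurable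
    (Filter.Eventually.of_forall fun x => by simpa using hC x)

lemma my_cont_integrable {X : Type*} [MeasurableSpace X] [MetricSpace X] [CompactSpace X]
    [BorelSpace X] (μ : Measure X) [IsFiniteMeasure μ] {f : X → ℝ} (hf : Continuous f) :
    Integrable f μ :=
  hf.integrable_of_hasCompactSupport (isClosed_tsupport f).isCompact

lemma my_tv_mem {X : Type*} [MeasurableSpace X] (μ ν : Measure X)
    [IsProbabilityMeasure μ] [IsProbabilityMeasure ν]
    {g : X → ℝ} (hg : Measurable g) (hgb : ∀ x, |g x| ≤ 1) :
    |∫ x, g x ∂μ - ∫ x, g x ∂ν| ≤ TV μ ν := by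
  refine le_csSup ⟨2, ?_⟩ ⟨g, hg, hgb, rfl⟩
  rintro r ⟨g', hg', hgb', rfl⟩
  have h1 : ∀ (κ : Measure X) [IsProbabilityMeasure κ], |∫ x, g' x ∂κ| ≤ 1 := by
    intro κ _
    rw [← Real.norm_eq_abs]
    calc ‖∫ x, g' x ∂κ‖ ≤ 1 * (κ Set.univ).toReal :=
          norm_integral_le_of_norm_le_const (Filter.Eventually.of_forall fun x => by
            simpa [Real.norm_eq_abs] using hgb' x)
      _ = 1 := by simp
  calc |∫ x, g' x ∂μ - ∫ x, g' x ∂ν| ≤ |∫ x, g' x ∂μ| + |∫ x, g' x ∂ν| := abs_sub _ _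
    _ ≤ 1 + 1 := add_le_add (h1 μ) (h1 ν)
    _ = 2 := by norm_num

lemma my_w1_mem {X : Type*} [MeasurableSpace X] [MetricSpace X] [CompactSpace X] [BorelSpace X]
    (μ ν : Measure X) [IsProbabilityMeasure μ] [IsProbabilityMeasure ν]
    {f : X → ℝ} (hf : LipschitzWith 1 f) :
    ∫ x, f x ∂μ - ∫ x, f x ∂ν ≤ W1 μ ν := by
  have : Nonempty X := MeasureTheory.Measure.nonempty_of_neZero μ
  obtain ⟨x₀⟩ := this
  refine le_csSup ⟨2 * Metric.diam (Set.univ : Set X), ?_⟩ ⟨f, hf, rfl⟩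
  rintro r ⟨f', hf', rfl⟩
  have h1 : ∀ (κ : Measure X) [IsProbabilityMeasure κ],
      |∫ x, f' x ∂κ - f' x₀| ≤ Metric.diam (Set.univ : Set X) := by
    intro κ _
    have hint : Integrable f' κ := my_cont_integrable κ hf'.continuous
    have : ∫ x, f' x ∂κ - f' x₀ = ∫ x, (f' x - f' x₀) ∂κ := by
      rw [integral_sub hint (integrable_const _), integral_const]
      simp
    rw [this, ← Real.norm_eq_abs]
    calc ‖∫ x, (f' x - f' x₀) ∂κ‖
        ≤ Metric.diam (Set.univ : Set X) * (κ Set.univ).toReal :=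
          norm_integral_le_of_norm_le_const (Filter.Eventually.of_forall fun x => by
            have := hf'.dist_le_mul x x₀
            simp only [Real.dist_eq] at this ⊢
            rw [Real.norm_eq_abs]
            calc |f' x - f' x₀| ≤ 1 * dist x x₀ := by simpa [Real.dist_eq] using this
              _ ≤ Metric.diam (Set.univ : Set X) := by
                  rw [one_mul]
                  exact Metric.dist_le_diam_of_mem (isCompact_univ.isBounded) trivial trivial)
      _ = Metric.diam (Set.univ : Set X) := by simp
  calc ∫ x, f' x ∂μ - ∫ x, f' x ∂ν
      = (∫ x, f' x ∂μ - f' x₀) + (f' x₀ - ∫ x, f' x ∂ν) := by ring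
    _ ≤ |∫ x, f' x ∂μ - f' x₀| + |f' x₀ - ∫ x, f' x ∂ν| :=
        add_le_add (le_abs_self _) (le_abs_self _)
    _ ≤ Metric.diam (Set.univ : Set X) + Metric.diam (Set.univ : Set X) := by
        refine add_le_add (h1 μ) ?_
        rw [abs_sub_comm]; exact h1 ν
    _ = 2 * Metric.diam (Set.univ : Set X) := by ring

theorem stmt7 {X : Type*} [MeasurableSpace X] [MetricSpace X] [CompactSpace X] [BorelSpace X]
    (T : Kernel X X) [IsMarkovKernel T] (α : ℝ) (hα : 0 < α)
    (hT : ∀ x x' : X, TV (T x) (T x') ≤ α * dist x x')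
    (D : ℝ) (hD : D = Metric.diam (Set.univ : Set X))
    (ω : X → ℝ) (hω : Measurable ω) (hωb : ∀ x, |ω x| ≤ D / 2)
    (z z' : Measure X) [IsProbabilityMeasure z] [IsProbabilityMeasure z'] :
    |(∫ x₀, ∫ x₁, ω x₁ ∂(T x₀) ∂z') - (∫ x₀, ∫ x₁, ω x₁ ∂(T x₀) ∂z)| ≤
      (α * D / 2) * W1 z z' := by
  have hD0 : 0 ≤ D := hD ▸ Metric.diam_nonneg
  rcases eq_or_lt_of_le hD0 with hDz | hDpos
  · -- D = 0, so ω = 0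
    have hω0 : ω = fun _ => 0 := by
      funext x
      have := hωb x
      have : |ω x| ≤ 0 := by linarith
      simpa [abs_nonpos_iff] using this
    subst hω0
    simp only [integral_zero, sub_zero, abs_zero]
    rw [← hDz]
    simp
  · set f : X → ℝ := fun x₀ => ∫ x₁, ω x₁ ∂(T x₀) with hf
    set K : ℝ := α * D / 2 with hK
    have hKpos : 0 < K := by positivity
    -- f is K-Lipschitz
    have hflip : ∀ x x', dist (f x) (f x') ≤ K * dist x x' := by
      intro x x'
      set g : X → ℝ := fun y => (2 / D) * ω y with hg
      have hgm : Measurable g := (measurable_const.mul hω)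
      have hgb : ∀ y, |g y| ≤ 1 := by
        intro y
        have := hωb y
        rw [hg]
        rw [abs_mul, abs_of_pos (by positivity : (0:ℝ) < 2 / D)]
        calc 2 / D * |ω y| ≤ 2 / D * (D / 2) := by
              apply mul_le_mul_of_nonneg_left this (by positivity)
          _ = 1 := by field_simp
      have htv : |∫ y, g y ∂(T x) - ∫ y, g y ∂(T x')| ≤ α * dist x x' :=
        (my_tv_mem (T x) (T x') hgm hgb).trans (hT x x')
      have hωint : ∀ u : X, Integrable ω (T u) := fun u =>
        my_integrable_of_bdd _ hω (D / 2) hωb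
      have hgint : ∀ u : X, ∫ y, g y ∂(T u) = (2 / D) * ∫ y, ω y ∂(T u) := fun u =>
        integral_const_mul _ _
      rw [Real.dist_eq]
      have hDne : D ≠ 0 := ne_of_gt hDpos
      have : f x - f x' = (D / 2) * (∫ y, g y ∂(T x) - ∫ y, g y ∂(T x')) := by
        rw [hgint, hgint, hf]
        field_simp
      rw [this, abs_mul, abs_of_pos (by positivity : (0:ℝ) < D / 2)]
      calc D / 2 * |∫ y, g y ∂(T x) - ∫ y, g y ∂(T x')| ≤ D / 2 * (α * dist x x') :=
            mul_le_mul_of_nonneg_left htv (by positivity)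
        _ = K * dist x x' := by rw [hK]; ring
    -- rescale to 1-Lipschitz
    set g : X → ℝ := fun x => K⁻¹ * f x with hgdef
    have hglip : LipschitzWith 1 g := by
      apply LipschitzWith.of_dist_le_mul
      intro x x'
      simp only [NNReal.coe_one, one_mul, hgdef]
      simp only [Real.dist_eq]
      rw [← mul_sub, abs_mul, abs_of_pos (inv_pos.mpr hKpos)]
      rw [inv_mul_le_iff₀ hKpos]
      exact (Real.dist_eq (f x) (f x')) ▸ hflip x x'
    have hgneg : LipschitzWith 1 (-g) := hglip.neg
    have hgint : ∀ (κ : Measure X) [IsProbabilityMeasure κ],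
        ∫ x, g x ∂κ = K⁻¹ * ∫ x, f x ∂κ := fun κ _ => integral_const_mul _ _
    have h1 : ∫ x, g x ∂z - ∫ x, g x ∂z' ≤ W1 z z' := my_w1_mem z z' hglip
    have h2 : ∫ x, (-g) x ∂z - ∫ x, (-g) x ∂z' ≤ W1 z z' :=
      my_w1_mem z z' hgneg
    simp only [Pi.neg_apply, integral_neg] at h2
    have habs : |∫ x, g x ∂z' - ∫ x, g x ∂z| ≤ W1 z z' := by
      rw [abs_sub_le_iff]
      constructor
      · linarith
      · linarith
    have key : |(∫ x₀, f x₀ ∂z') - (∫ x₀, f x₀ ∂z)| = K * |∫ x, g x ∂z' - ∫ x, g x ∂z| := by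
      rw [hgint z', hgint z, ← mul_sub, abs_mul, abs_of_pos (inv_pos.mpr hKpos)]
      field_simp
    calc |(∫ x₀, ∫ x₁, ω x₁ ∂(T x₀) ∂z') - (∫ x₀, ∫ x₁, ω x₁ ∂(T x₀) ∂z)|
        = K * |∫ x, g x ∂z' - ∫ x, g x ∂z| := key
      _ ≤ K * W1 z z' := mul_le_mul_of_nonneg_left habs (le_of_lt hKpos)
      _ = (α * D / 2) * W1 z z' := by rw [hK]
end

section
/- For two normal distributions N(x,σ²) and N(y,σ²) on ℝ, the total variation distance satisfies ‖N(y,σ²) − N(x,σ²)‖_TV = 2 − 4Φ((x−y)/(2σ)) for x < y, and hence ‖N(y,σ²) − N(x,σ²)‖_TV ≤ |y−x|·√(2/π)/σ. -/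
open MeasureTheory ProbabilityTheory

/-- Standard normal cumulative distribution function. -/
noncomputable def stdNormalCDF (t : ℝ) : ℝ :=
  ((gaussianReal 0 1) (Set.Iic t)).toReal

/-!
For laws `μ = f ρ` and `ν = g ρ` with densities, `∫ h dμ - ∫ h dν = ∫ h (f - g) dρ`, so the
supremum defining `TV μ ν` is at most `∫ |f - g| dρ`, and it is attained at `h = ±1` according
to the sign of `f - g`; for probability measures this value is `2 (μ S - ν S)`, `S = {g ≤ f}`.
For `N(y, σ²)` and `N(x, σ²)` with `x < y`, `S` is the half-line `[(x + y) / 2, ∞)`, which has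
masses `Φ(c)` and `Φ(-c)`, `c = (y - x) / (2σ)`. The bound follows because the standard normal
density is at most `1 / √(2π)`, so `Φ` is `1 / √(2π)`-Lipschitz.
-/

open Real Set
open scoped NNReal

section SignIndicator

variable {X : Type*} {f g : X → ℝ}

noncomputable def signIndicator (s : Set X) (x : X) : ℝ := 2 * s.indicator 1 x - 1

lemma abs_signIndicator_le (s : Set X) (x : X) : |signIndicator s x| ≤ 1 := by
  by_cases hx : x ∈ s <;> norm_num [signIndicator, hx]

lemma signIndicator_setOf_le_mul_sub (x : X) :
    signIndicator {y | g y ≤ f y} x * (f x - g x) = |f x - g x| := by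
  by_cases hx : g x ≤ f x
  · rw [abs_of_nonneg (sub_nonneg.2 hx)]
    norm_num [signIndicator, hx]
  · rw [abs_of_neg (sub_neg.2 (not_le.1 hx))]
    simp [signIndicator, hx]

variable [MeasurableSpace X] {μ : Measure X}

lemma measurable_signIndicator {s : Set X} (hs : MeasurableSet s) :
    Measurable (signIndicator s) :=
  (measurable_const.mul (measurable_const.indicator hs)).sub measurable_const

lemma integral_signIndicator [IsProbabilityMeasure μ] {s : Set X} (hs : MeasurableSet s) :
    ∫ x, signIndicator s x ∂μ = 2 * μ.real s - 1 := by
  simp only [signIndicator]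
  rw [integral_sub (((integrable_const 1).indicator hs).const_mul 2) (integrable_const 1),
    integral_const_mul, integral_indicator_one hs, integral_const, probReal_univ, smul_eq_mul,
    mul_one]

end SignIndicator

section Density

variable {X : Type*} [MeasurableSpace X] {ρ μ ν : Measure X} {f g : X → ℝ}

variable (hf : Integrable f ρ) (hg : Integrable g ρ)
  (hf₀ : ∀ x, 0 ≤ f x) (hg₀ : ∀ x, 0 ≤ g x) (hfm : Measurable f) (hgm : Measurable g)
  (hμ : μ = ρ.withDensity fun x => ENNReal.ofReal (f x))
  (hν : ν = ρ.withDensity fun x => ENNReal.ofReal (g x))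
include hf hg hf₀ hg₀ hfm hgm hμ hν

lemma integral_sub_integral_eq_integral_mul_sub {h : X → ℝ} (hh : Measurable h) {C : ℝ}
    (hC : ∀ x, |h x| ≤ C) :
    ∫ x, h x ∂μ - ∫ x, h x ∂ν = ∫ x, h x * (f x - g x) ∂ρ := by
  have hbdd : ∀ᵐ x ∂ρ, ‖h x‖ ≤ C := ae_of_all _ hC
  subst hμ hν
  simp_rw [integral_withDensity_eq_integral_toReal_smul hfm.ennreal_ofReal
      (ae_of_all _ fun _ => ENNReal.ofReal_lt_top),
    integral_withDensity_eq_integral_toReal_smul hgm.ennreal_ofReal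
      (ae_of_all _ fun _ => ENNReal.ofReal_lt_top),
    ENNReal.toReal_ofReal (hf₀ _), ENNReal.toReal_ofReal (hg₀ _), smul_eq_mul, mul_sub]
  rw [← integral_sub]
  · simp_rw [mul_comm]
  · simpa only [mul_comm] using hf.bdd_mul hh.aestronglyMeasurable hbdd
  · simpa only [mul_comm] using hg.bdd_mul hh.aestronglyMeasurable hbdd

lemma abs_integral_sub_integral_le {h : X → ℝ} (hh : Measurable h) (h_le : ∀ x, |h x| ≤ 1) :
    |∫ x, h x ∂μ - ∫ x, h x ∂ν| ≤ ∫ x, |f x - g x| ∂ρ := by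
  rw [integral_sub_integral_eq_integral_mul_sub hf hg hf₀ hg₀ hfm hgm hμ hν hh h_le]
  refine abs_integral_le_integral_abs.trans (integral_mono_of_nonneg
    (ae_of_all _ fun _ => abs_nonneg _) (hf.sub hg).abs (ae_of_all _ fun x => ?_))
  dsimp only
  rw [abs_mul]
  exact mul_le_of_le_one_left (abs_nonneg _) (h_le x)

lemma integral_abs_sub_eq_integral_sub_integral :
    ∫ x, |f x - g x| ∂ρ = ∫ x, signIndicator {y | g y ≤ f y} x ∂μ -
      ∫ x, signIndicator {y | g y ≤ f y} x ∂ν := by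
  rw [integral_sub_integral_eq_integral_mul_sub hf hg hf₀ hg₀ hfm hgm hμ hν
    (measurable_signIndicator (measurableSet_le hgm hfm)) (abs_signIndicator_le _)]
  simp_rw [signIndicator_setOf_le_mul_sub]

lemma TV_eq_integral_abs_sub : TV μ ν = ∫ x, |f x - g x| ∂ρ := by
  have h_bound : ∀ r ∈ {r : ℝ | ∃ h : X → ℝ, Measurable h ∧ (∀ x, |h x| ≤ 1) ∧
      r = |∫ x, h x ∂μ - ∫ x, h x ∂ν|}, r ≤ ∫ x, |f x - g x| ∂ρ := by
    rintro r ⟨h, hh, h_le, rfl⟩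
    exact abs_integral_sub_integral_le hf hg hf₀ hg₀ hfm hgm hμ hν hh h_le
  refine le_antisymm (csSup_le ⟨_, 0, measurable_const, by simp, rfl⟩ h_bound)
    (le_csSup ⟨_, h_bound⟩ ⟨_, measurable_signIndicator (measurableSet_le hgm hfm),
      abs_signIndicator_le _, ?_⟩)
  rw [← integral_abs_sub_eq_integral_sub_integral hf hg hf₀ hg₀ hfm hgm hμ hν,
    abs_of_nonneg (integral_nonneg fun _ => abs_nonneg _)]

lemma TV_eq_two_mul_measureReal_sub [IsProbabilityMeasure μ] [IsProbabilityMeasure ν] :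
    TV μ ν = 2 * (μ.real {x | g x ≤ f x} - ν.real {x | g x ≤ f x}) := by
  rw [TV_eq_integral_abs_sub hf hg hf₀ hg₀ hfm hgm hμ hν,
    integral_abs_sub_eq_integral_sub_integral hf hg hf₀ hg₀ hfm hgm hμ hν,
    integral_signIndicator (measurableSet_le hgm hfm),
    integral_signIndicator (measurableSet_le hgm hfm)]
  ring

end Density

section Gaussian

lemma gaussianPDFReal_le_gaussianPDFReal_iff {x y : ℝ} (hxy : x < y) {v : ℝ≥0} (hv : v ≠ 0)
    (t : ℝ) : gaussianPDFReal x v t ≤ gaussianPDFReal y v t ↔ (x + y) / 2 ≤ t := by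
  have hv₀ : (0 : ℝ) < v := NNReal.coe_pos.2 (pos_iff_ne_zero.2 hv)
  rw [gaussianPDFReal, gaussianPDFReal, mul_le_mul_iff_of_pos_left (by positivity), exp_le_exp,
    div_le_div_iff_of_pos_right (by positivity), neg_le_neg_iff]
  constructor <;> intro h <;> nlinarith

lemma gaussianPDFReal_le_inv_sqrt (μ : ℝ) (v : ℝ≥0) (t : ℝ) :
    gaussianPDFReal μ v t ≤ (√(2 * π * v))⁻¹ := by
  refine mul_le_of_le_one_right (by positivity) (exp_le_one_iff.2 ?_)
  exact div_nonpos_of_nonpos_of_nonneg (neg_nonpos.2 (sq_nonneg _)) (by positivity)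

lemma gaussianReal_real_Ici (a : ℝ) {σ : ℝ} (hσ : 0 < σ) (t : ℝ) :
    (gaussianReal a ⟨σ ^ 2, sq_nonneg σ⟩).real (Ici t) = stdNormalCDF ((a - t) / σ) := by
  have hmap :
      (gaussianReal 0 1).map (fun z => a - σ * z) = gaussianReal a ⟨σ ^ 2, sq_nonneg σ⟩ := by
    rw [show (fun z => a - σ * z) = (a - ·) ∘ (σ * ·) from rfl,
      ← Measure.map_map (by fun_prop) (by fun_prop), gaussianReal_map_const_mul,
      gaussianReal_map_const_sub]
    congr 1
    · ring
    · ext; simp; rfl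
  rw [← hmap, measureReal_def, Measure.map_apply (by fun_prop) measurableSet_Ici, stdNormalCDF]
  congr 2
  ext z
  simp only [mem_preimage, mem_Ici, mem_Iic, le_div_iff₀ hσ]
  constructor <;> intro h <;> linarith

lemma stdNormalCDF_neg (t : ℝ) : stdNormalCDF (-t) = 1 - stdNormalCDF t := by
  have := nullSingletonClass_gaussianReal (μ := 0) one_ne_zero
  have hsymm : (gaussianReal 0 1).map (fun z => -z) = gaussianReal 0 1 := by
    rw [gaussianReal_map_neg, neg_zero]
  rw [stdNormalCDF, stdNormalCDF, ← measureReal_def, ← measureReal_def, ← hsymm,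
    map_measureReal_apply (by fun_prop) measurableSet_Iic, hsymm,
    show (fun z => -z) ⁻¹' Iic (-t) = (Iio t)ᶜ by ext; simp,
    probReal_compl_eq_one_sub measurableSet_Iio, measureReal_congr Iio_ae_eq_Iic]

lemma stdNormalCDF_sub_le {a b : ℝ} (hab : a ≤ b) :
    stdNormalCDF b - stdNormalCDF a ≤ (b - a) / √(2 * π) :=
  calc stdNormalCDF b - stdNormalCDF a = (gaussianReal 0 1).real (Ioc a b) := by
        rw [stdNormalCDF, stdNormalCDF, ← measureReal_def, ← measureReal_def,
          ← Iic_union_Ioc_eq_Iic hab,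
          measureReal_union (Iic_disjoint_Ioc le_rfl) measurableSet_Ioc]
        ring
    _ = ∫ t in Ioc a b, gaussianPDFReal 0 1 t := by
        rw [measureReal_def, gaussianReal_apply_eq_integral 0 one_ne_zero, ENNReal.toReal_ofReal
          (setIntegral_nonneg measurableSet_Ioc fun t _ => gaussianPDFReal_nonneg 0 1 t)]
    _ ≤ (√(2 * π))⁻¹ * volume.real (Ioc a b) := by
        refine (le_abs_self _).trans ?_
        rw [← Real.norm_eq_abs]
        refine norm_setIntegral_le_of_norm_le_const measure_Ioc_lt_top fun t _ => ?_
        rw [Real.norm_eq_abs, abs_of_nonneg (gaussianPDFReal_nonneg 0 1 t)]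
        simpa using gaussianPDFReal_le_inv_sqrt 0 1 t
    _ = (b - a) / √(2 * π) := by
        rw [Real.volume_real_Ioc_of_le hab, inv_mul_eq_div]

lemma TV_gaussianReal {σ : ℝ} (hσ : 0 < σ) {x y : ℝ} (hxy : x < y) :
    TV (gaussianReal y ⟨σ ^ 2, sq_nonneg σ⟩) (gaussianReal x ⟨σ ^ 2, sq_nonneg σ⟩) =
      2 * (stdNormalCDF ((y - x) / (2 * σ)) - stdNormalCDF ((x - y) / (2 * σ))) := by
  set v : ℝ≥0 := ⟨σ ^ 2, sq_nonneg σ⟩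
  have hv : v ≠ 0 := by
    rw [ne_eq, ← NNReal.coe_eq_zero]
    exact pow_ne_zero 2 hσ.ne'
  have hS : {t | gaussianPDFReal x v t ≤ gaussianPDFReal y v t} = Ici ((x + y) / 2) :=
    ext (gaussianPDFReal_le_gaussianPDFReal_iff hxy hv)
  rw [TV_eq_two_mul_measureReal_sub (integrable_gaussianPDFReal y v)
      (integrable_gaussianPDFReal x v) (gaussianPDFReal_nonneg y v) (gaussianPDFReal_nonneg x v)
      (measurable_gaussianPDFReal y v) (measurable_gaussianPDFReal x v)
      (gaussianReal_of_var_ne_zero y hv) (gaussianReal_of_var_ne_zero x hv),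
    hS, gaussianReal_real_Ici y hσ, gaussianReal_real_Ici x hσ]
  congr 3 <;> field_simp <;> ring

end Gaussian

theorem stmt10 (σ : ℝ) (hσ : 0 < σ) (x y : ℝ) (hxy : x < y) :
    TV (gaussianReal y ⟨σ ^ 2, sq_nonneg σ⟩) (gaussianReal x ⟨σ ^ 2, sq_nonneg σ⟩) =
      2 - 4 * stdNormalCDF ((x - y) / (2 * σ)) ∧
    TV (gaussianReal y ⟨σ ^ 2, sq_nonneg σ⟩) (gaussianReal x ⟨σ ^ 2, sq_nonneg σ⟩) ≤
      |y - x| * Real.sqrt (2 / Real.pi) / σ := by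
  set c := (y - x) / (2 * σ)
  have hc : (x - y) / (2 * σ) = -c := by ring
  rw [TV_gaussianReal hσ hxy, hc]
  refine ⟨by linarith [stdNormalCDF_neg c], ?_⟩
  have hsqrt : √(2 / π) = 2 / √(2 * π) := by
    rw [eq_div_iff (by positivity), ← sqrt_mul (by positivity),
      show 2 / π * (2 * π) = 2 ^ 2 by field_simp, sqrt_sq zero_le_two]
  calc 2 * (stdNormalCDF c - stdNormalCDF (-c)) ≤ 2 * ((c - -c) / √(2 * π)) := by
        gcongr
        exact stdNormalCDF_sub_le (neg_le_self (div_nonneg (sub_nonneg.2 hxy.le) (by positivity)))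
    _ = |y - x| * √(2 / π) / σ := by
        rw [abs_of_pos (sub_pos.2 hxy), hsqrt]
        simp only [c]
        field_simp
        ring
end

section
/- Let K be a mixing kernel on X with constant ε. Then the Hilbert-metric diameter of the image of K on probability measures is bounded: h(Kμ, Kν) ≤ log(1/ε⁴) for all probability measures μ, ν, where h is the Hilbert metric. -/
/- Averaging the mixing bounds over μ and over ν shows that Kμ and Kν both lie between ελ and
ε⁻¹λ on every measurable set, so every ratio Kμ(A)/Kν(A) lies in [ε², ε⁻²]; the Hilbert metric
is the logarithm of the largest over the smallest such ratio, hence at most log(ε⁻²/ε²). -/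

open MeasureTheory ProbabilityTheory

/-- The Hilbert (projective) metric between two measures. -/
noncomputable def hilbertMetric {X : Type*} [MeasurableSpace X] (μ ν : Measure X) : ℝ :=
  Real.log
    (sSup {r : ℝ | ∃ A : Set X, MeasurableSet A ∧ 0 < ν A ∧
        r = (μ A).toReal / (ν A).toReal} /
     sInf {r : ℝ | ∃ A : Set X, MeasurableSet A ∧ 0 < ν A ∧
        r = (μ A).toReal / (ν A).toReal})

theorem hilbertMetric_le_log_div {X : Type*} [MeasurableSpace X] {μ ν : Measure X} {c C : ℝ}
    (hc : 0 < c) (hcC : c ≤ C)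
    (h : ∀ A : Set X, MeasurableSet A → 0 < ν A →
      (μ A).toReal / (ν A).toReal ∈ Set.Icc c C) :
    hilbertMetric μ ν ≤ Real.log (C / c) := by
  set S : Set ℝ := {r : ℝ | ∃ A : Set X, MeasurableSet A ∧ 0 < ν A ∧
    r = (μ A).toReal / (ν A).toReal}
  have hS : S ⊆ Set.Icc c C := by
    rintro r ⟨A, hA, hpos, rfl⟩
    exact h A hA hpos
  show Real.log (sSup S / sInf S) ≤ Real.log (C / c)
  rcases S.eq_empty_or_nonempty with hempty | hne
  · -- with no admissible set, `sSup ∅ = sInf ∅ = 0` and the metric is `log 0 = 0`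
    rw [hempty, Real.sSup_empty, Real.sInf_empty, zero_div, Real.log_zero]
    exact Real.log_nonneg ((one_le_div hc).mpr hcC)
  · have hinf : c ≤ sInf S := le_csInf hne fun r hr => (hS hr).1
    have hsup : sSup S ≤ C := csSup_le hne fun r hr => (hS hr).2
    have hsup_pos : 0 < sSup S := by
      obtain ⟨r, hr⟩ := hne
      exact hc.trans_le ((hS hr).1.trans (le_csSup ⟨C, fun r hr => (hS hr).2⟩ hr))
    exact Real.log_le_log (div_pos hsup_pos (hc.trans_le hinf))
      (div_le_div₀ (hc.le.trans hcC) hsup hc hinf)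

theorem MeasureTheory.Measure.bind_apply_mem_Icc {X Y : Type*} [MeasurableSpace X] [MeasurableSpace Y]
    (κ : Kernel X Y) (ρ : Measure X) [IsProbabilityMeasure ρ] {A : Set Y} (hA : MeasurableSet A)
    {a b : ENNReal} (h : ∀ x, κ x A ∈ Set.Icc a b) :
    ρ.bind (fun x => κ x) A ∈ Set.Icc a b := by
  rw [Measure.bind_apply hA κ.measurable.aemeasurable]
  constructor
  · simpa using lintegral_mono (μ := ρ) fun x => (h x).1
  · simpa using lintegral_mono (μ := ρ) fun x => (h x).2

theorem div_mem_Icc_sq_of_mem_Icc {ε l a b : ℝ} (hε : 0 < ε) (hb : 0 < b)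
    (ha : a ∈ Set.Icc (ε * l) (ε⁻¹ * l)) (hb' : b ∈ Set.Icc (ε * l) (ε⁻¹ * l)) :
    a / b ∈ Set.Icc (ε ^ 2) (ε ^ 2)⁻¹ := by
  have hl : 0 < l := pos_of_mul_pos_right (hb.trans_le hb'.2) (inv_pos.mpr hε).le
  constructor
  · calc ε ^ 2 = ε * l / (ε⁻¹ * l) := by field_simp
      _ ≤ a / b := div_le_div₀ ((mul_pos hε hl).le.trans ha.1) ha.1 hb hb'.2
  · calc a / b ≤ ε⁻¹ * l / (ε * l) := div_le_div₀ (by positivity) ha.2 (by positivity) hb'.1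
      _ = (ε ^ 2)⁻¹ := by field_simp

theorem ENNReal.toReal_div_mem_Icc_sq {ε : ℝ} (hε : 0 < ε) {a b l : ENNReal}
    (ha : a ∈ Set.Icc (ENNReal.ofReal ε * l) ((ENNReal.ofReal ε)⁻¹ * l))
    (hb : b ∈ Set.Icc (ENNReal.ofReal ε * l) ((ENNReal.ofReal ε)⁻¹ * l))
    (hb_pos : 0 < b) (hb_top : b ≠ ⊤) :
    a.toReal / b.toReal ∈ Set.Icc (ε ^ 2) (ε ^ 2)⁻¹ := by
  have hl : l ≠ ⊤ := fun hl => ne_top_of_le_ne_top hb_top hb.1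
    (ENNReal.mul_eq_top.mpr (Or.inl ⟨(ENNReal.ofReal_pos.mpr hε).ne', hl⟩))
  have hupper : (ENNReal.ofReal ε)⁻¹ * l ≠ ⊤ := by finiteness
  have hreal : ∀ {x : ENNReal}, x ∈ Set.Icc (ENNReal.ofReal ε * l) ((ENNReal.ofReal ε)⁻¹ * l) →
      x.toReal ∈ Set.Icc (ε * l.toReal) (ε⁻¹ * l.toReal) := fun hx => by
    have h1 := ENNReal.toReal_mono (ne_top_of_le_ne_top hupper hx.2) hx.1
    have h2 := ENNReal.toReal_mono hupper hx.2
    rw [ENNReal.toReal_mul, ENNReal.toReal_ofReal hε.le] at h1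
    rw [ENNReal.toReal_mul, ENNReal.toReal_inv, ENNReal.toReal_ofReal hε.le] at h2
    exact ⟨h1, h2⟩
  exact div_mem_Icc_sq_of_mem_Icc hε (ENNReal.toReal_pos hb_pos.ne' hb_top) (hreal ha) (hreal hb)

theorem stmt14 {X : Type*} [MeasurableSpace X]
    (K : Kernel X X) [IsFiniteKernel K] (ε : ℝ) (hε0 : 0 < ε) (hε1 : ε ≤ 1)
    (lam : Measure X)
    (hmix : ∀ (x : X) (A : Set X), MeasurableSet A →
      ENNReal.ofReal ε * lam A ≤ K x A ∧ K x A ≤ (ENNReal.ofReal ε)⁻¹ * lam A)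
    (μ ν : Measure X) [IsProbabilityMeasure μ] [IsProbabilityMeasure ν] :
    hilbertMetric (μ.bind (fun x => K x)) (ν.bind (fun x => K x)) ≤
      Real.log (1 / ε ^ 4) := by
  have hbind : ∀ (ρ : Measure X) [IsProbabilityMeasure ρ] (A : Set X), MeasurableSet A →
      ρ.bind (fun x => K x) A ∈ Set.Icc (ENNReal.ofReal ε * lam A) ((ENNReal.ofReal ε)⁻¹ * lam A) :=
    fun ρ _ A hA => Measure.bind_apply_mem_Icc K ρ hA fun x => hmix x A hA
  have hsq_le_one : ε ^ 2 ≤ 1 := pow_le_one₀ hε0.le hε1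
  have hsq : ε ^ 2 ≤ (ε ^ 2)⁻¹ := hsq_le_one.trans ((one_le_inv₀ (by positivity)).mpr hsq_le_one)
  calc hilbertMetric (μ.bind (fun x => K x)) (ν.bind (fun x => K x))
      ≤ Real.log ((ε ^ 2)⁻¹ / ε ^ 2) :=
        hilbertMetric_le_log_div (by positivity) hsq fun A hA hpos =>
          ENNReal.toReal_div_mem_Icc_sq hε0 (hbind μ A hA) (hbind ν A hA) hpos (measure_ne_top _ A)
    _ = Real.log (1 / ε ^ 4) := by congr 1; field_simp
end
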